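/- Let r, v ∈ ℝ^n with v ≠ 0, let the reference object be the single point ℛ = {r}, let the vector field be constant equal to v, and let the distribution be 𝒟₂(t) = 1 if −2 ≤ t ≤ 1 and 𝒟₂(t) = 0 otherwise. Then for any point p ∈ ℝ^n, the normalization sum S is nonzero and prob(r) = 1 if and only if −2 ≤ (v · (p − r))/‖v‖ ≤ 1. Hence the pipeline partitions ℝ^n into the closed slab {p : −2‖v‖ ≤ v · (p − r) ≤ ‖v‖} bounded by two parallel hyperplanes orthogonal to v (output 1) and its complement (output 0). -/

import Mathlib

/-!
With a single reference point the filter value is the signed length of the projection of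
`p - r` onto `ℝ ∙ v`, i.e. the scalar projection `⟪v, p - r⟫ / ‖v‖`. Since `𝒟₂` is an indicator,
`S = 𝒟₂(filter r)` is `0` or `1`, and `prob r = S / S` equals `1` exactly when `S ≠ 0`, that is,
when the scalar projection lies in `[-2, 1]`; multiplying through by `‖v‖ > 0` gives the slab.
-/

open RealInnerProductSpace

section SpanSingleton

variable {E : Type*} [NormedAddCommGroup E] [InnerProductSpace ℝ E]

theorem norm_orthogonalProjectionOnto_span_singleton (v w : E) :
    ‖((ℝ ∙ v).orthogonalProjectionOnto w : E)‖ = |⟪v, w⟫| / ‖v‖ := by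
  change ‖(ℝ ∙ v).starProjection w‖ = _
  rw [Submodule.starProjection_singleton, RCLike.ofReal_real_eq_id, id_eq, norm_smul,
    Real.norm_eq_abs, abs_div, abs_pow, abs_norm, pow_two, div_mul_eq_div_div,
    div_mul_cancel_of_imp]
  intro hv
  simp [hv]

theorem signed_norm_orthogonalProjectionOnto_span_singleton (v w : E) :
    (if 0 ≤ ⟪v, w⟫ then ‖((ℝ ∙ v).orthogonalProjectionOnto w : E)‖
      else -‖((ℝ ∙ v).orthogonalProjectionOnto w : E)‖) = ⟪v, w⟫ / ‖v‖ := by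
  rw [norm_orthogonalProjectionOnto_span_singleton]
  split_ifs with h
  · rw [abs_of_nonneg h]
  · rw [abs_of_neg (not_le.mp h), neg_div, neg_neg]

end SpanSingleton

theorem ne_zero_and_ite_div_self_eq_one_iff {G : Type*} [GroupWithZero G] [DecidableEq G]
    (x : G) :
    (x ≠ 0 ∧ (if x = 0 then 0 else x / x) = 1) ↔ x ≠ 0 :=
  ⟨And.left, fun hx => ⟨hx, by rw [if_neg hx, div_self hx]⟩⟩

/-- One-point reference object `{r}`, constant vector field `v ≠ 0`, distribution
`𝒟₂ = indicator of [-2, 1]`. For any point `p`, the normalization sum `S = 𝒟₂(filter r)` is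
nonzero with `prob r = 1` if and only if `-2 ≤ ⟪v, p - r⟫ / ‖v‖ ≤ 1`; moreover this condition
describes the closed slab `{p : -2‖v‖ ≤ ⟪v, p - r⟫ ≤ ‖v‖}` bounded by two parallel
hyperplanes orthogonal to `v`. -/
theorem stmt5 {n : ℕ} (r v p : EuclideanSpace ℝ (Fin n)) (hv : v ≠ 0)
    (filter : EuclideanSpace ℝ (Fin n) → ℝ)
    (hfilter : ∀ x : EuclideanSpace ℝ (Fin n),
      filter x =
        if 0 ≤ ⟪v, p - x⟫ then
          ‖(Submodule.orthogonalProjectionOnto (ℝ ∙ v) (p - x) : EuclideanSpace ℝ (Fin n))‖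
        else
          -‖(Submodule.orthogonalProjectionOnto (ℝ ∙ v) (p - x) : EuclideanSpace ℝ (Fin n))‖)
    (D₂ : ℝ → ℝ) (hD₂ : ∀ t : ℝ, D₂ t = if -2 ≤ t ∧ t ≤ 1 then 1 else 0)
    (S : ℝ) (hS : S = D₂ (filter r))
    (prob : EuclideanSpace ℝ (Fin n) → ℝ)
    (hprob : prob r = if S = 0 then 0 else D₂ (filter r) / S) :
    ((S ≠ 0 ∧ prob r = 1) ↔
        (-2 ≤ ⟪v, p - r⟫ / ‖v‖ ∧ ⟪v, p - r⟫ / ‖v‖ ≤ 1)) ∧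
      ((-2 ≤ ⟪v, p - r⟫ / ‖v‖ ∧ ⟪v, p - r⟫ / ‖v‖ ≤ 1) ↔
        (-2 * ‖v‖ ≤ ⟪v, p - r⟫ ∧ ⟪v, p - r⟫ ≤ ‖v‖)) := by
  have hfilter_r : filter r = ⟪v, p - r⟫ / ‖v‖ := by
    rw [hfilter, signed_norm_orthogonalProjectionOnto_span_singleton]
  have hv_pos : 0 < ‖v‖ := norm_pos_iff.mpr hv
  constructor
  · rw [hprob, ← hS, ne_zero_and_ite_div_self_eq_one_iff, hS, hD₂, hfilter_r]
    simp
  · rw [le_div_iff₀ hv_pos, div_le_iff₀ hv_pos, one_mul]
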